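/- arXiv:math/0505334 — 2 statements merged into one kernel-verified Lean document; each statement's English description precedes it below -/
import Mathlib

section
/- Let k be a field and let K be a 1-dimensional finite simplicial complex. Let G(K) be the graph whose vertices are the vertices of K and whose edges are the 1-dimensional faces of K. Then K is doubly Cohen–Macaulay over k if and only if G(K) is 2-connected. -/
namespace Paper2CM

variable {V : Type*} [Fintype V] [LinearOrder V]

/-- `sign(t,T) = (−1)^{|{s ∈ T : s < t}|}`. -/
def signOf (t : V) (T : Finset V) : ℤ := (-1) ^ (T.filter (fun s => s < t)).card

/-- The simplicial boundary operator on formal chains with coefficients in an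
abelian group `A`: `∂c(S) = Σ_{t ∉ S} sign(t, S ∪ {t}) • c(S ∪ {t})`. -/
def bdry {A : Type*} [AddCommGroup A] (c : Finset V → A) : Finset V → A :=
  fun S => ∑ t ∈ Sᶜ, signOf t (insert t S) • c (insert t S)

/-- A chain of degree `n - 1`, i.e. supported on sets of cardinality `n`. -/
def IsSimpChain {A : Type*} [AddCommGroup A] (n : ℕ) (c : Finset V → A) : Prop :=
  ∀ T, c T ≠ 0 → T.card = n

/-- `c'` is a subchain of `c`: each coefficient of `c'` agrees with that of `c` or is `0`. -/
def Subchain {A : Type*} [AddCommGroup A] (c' c : Finset V → A) : Prop :=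
  ∀ T, c' T = c T ∨ c' T = 0

/-- A minimal cycle supported on sets of cardinality `n` (so of dimension `n - 1`):
a nonzero cycle whose only subchains that are cycles are `0` and itself. -/
def IsMinimalCycle {A : Type*} [AddCommGroup A] (n : ℕ) (c : Finset V → A) : Prop :=
  c ≠ 0 ∧ IsSimpChain n c ∧ bdry c = 0 ∧
    ∀ c', Subchain c' c → bdry c' = 0 → c' = 0 ∨ c' = c

/-- The simplicial complex spanned by the support of a chain. -/
def spannedComplex {A : Type*} [AddCommGroup A] (c : Finset V → A) : Set (Finset V) :=
  {S | ∃ T, c T ≠ 0 ∧ S ⊆ T}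

/-- A (finite) simplicial complex on vertex type `V`: a collection of finite subsets
closed under taking subsets, containing the empty set. -/
def IsComplex (K : Set (Finset V)) : Prop :=
  ∅ ∈ K ∧ ∀ S ∈ K, ∀ T, T ⊆ S → T ∈ K

/-- The link of a face: `lk_L(T) = {S ∈ L : S ∩ T = ∅, S ∪ T ∈ L}`. -/
def cxLink (L : Set (Finset V)) (T : Finset V) : Set (Finset V) :=
  {S | S ∈ L ∧ Disjoint S T ∧ S ∪ T ∈ L}

/-- A pure complex: every face is contained in a face of maximal cardinality. -/
def IsPure (L : Set (Finset V)) : Prop :=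
  ∀ S ∈ L, ∃ F ∈ L, S ⊆ F ∧ ∀ G ∈ L, G.card ≤ F.card

/-- A chain of the complex `L` supported on faces of `L` of cardinality `n`. -/
def IsChainOn (k : Type*) [Field k] (L : Set (Finset V)) (n : ℕ) (c : Finset V → k) : Prop :=
  ∀ T, c T ≠ 0 → T ∈ L ∧ T.card = n

/-- Vanishing of the reduced homology `H̃_{n-1}(L; k)`: every cycle supported on
cardinality-`n` faces of `L` is the boundary of a chain on cardinality-`(n+1)` faces of `L`. -/
def HomologyVanishes (k : Type*) [Field k] (L : Set (Finset V)) (n : ℕ) : Prop :=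
  ∀ c : Finset V → k, IsChainOn k L n c → bdry c = 0 →
    ∃ b : Finset V → k, IsChainOn k L (n + 1) b ∧ bdry b = c

/-- Cohen–Macaulay over `k` via Reisner's criterion: `L` is pure and for every face
`T ∈ L` and every `i < dim lk_L(T)`, `H̃_i(lk_L(T); k) = 0` (here `i = n - 1`, and
`i < dim lk_L(T)` is expressed as: the link has a face of cardinality `> n`). -/
def IsCM (k : Type*) [Field k] (L : Set (Finset V)) : Prop :=
  IsPure L ∧ ∀ T ∈ L, ∀ n : ℕ, (∃ F ∈ cxLink L T, n < F.card) →
    HomologyVanishes k (cxLink L T) n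

/-- Doubly Cohen–Macaulay over `k`: `K` is CM and for every vertex `v` of `K`,
`K − v` is CM of the same dimension as `K` (same maximal cardinality of a face). -/
def Is2CM (k : Type*) [Field k] (K : Set (Finset V)) : Prop :=
  IsCM k K ∧ ∀ v : V, ({v} : Finset V) ∈ K →
    IsCM k {S | S ∈ K ∧ v ∉ S} ∧
    ∀ S ∈ K, ∃ F ∈ K, v ∉ F ∧ S.card ≤ F.card

/-- Adjacency via an edge set consisting of 2-element subsets. -/
def adjRel (E : Set (Finset V)) (u w : V) : Prop :=
  u ≠ w ∧ ({u, w} : Finset V) ∈ E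

/-- The graph with vertex set `W` and edge set `E` is connected: `W` is nonempty and
any two vertices of `W` are joined by a walk along edges of `E`. -/
def ConnectedOn (W : Set V) (E : Set (Finset V)) : Prop :=
  W.Nonempty ∧ ∀ u ∈ W, ∀ w ∈ W, Relation.ReflTransGen (adjRel E) u w

/-- A finite simple graph `(W, E)` is 2-connected if for every vertex `v ∈ W`, the
graph `G − v` (delete `v` and all edges incident to it) is connected and non-trivial
(it has at least two vertices). -/
def TwoConnected (W : Set V) (E : Set (Finset V)) : Prop :=
  ∀ v ∈ W, 2 ≤ (W \ {v}).ncard ∧ ConnectedOn (W \ {v}) {e ∈ E | v ∉ e}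

/-- `(W, E)` is a simple cycle: the vertices and edges of a closed walk of length
`m ≥ 3` with no repeated vertices. -/
def IsSimpleCycle (W : Set V) (E : Set (Finset V)) : Prop :=
  ∃ m : ℕ, 3 ≤ m ∧ ∃ g : ZMod m → V, Function.Injective g ∧
    W = Set.range g ∧ E = {e | ∃ i : ZMod m, e = ({g i, g (i + 1)} : Finset V)}

set_option linter.unusedSectionVars false
set_option maxHeartbeats 1000000

section ChainLemmas

lemma signOf_single (t : V) : signOf t ({t} : Finset V) = 1 := by
  simp [signOf, Finset.filter_singleton, lt_irrefl]

lemma signOf_pair_left {a b : V} (h : a < b) : signOf a ({a, b} : Finset V) = 1 := by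
  simp [signOf, Finset.filter_insert, Finset.filter_singleton, lt_irrefl, lt_asymm h]

lemma signOf_pair_right {a b : V} (h : a < b) : signOf b ({a, b} : Finset V) = -1 := by
  simp [signOf, Finset.filter_insert, Finset.filter_singleton, lt_irrefl, h]

lemma signOf_pair_add {a b : V} (h : a ≠ b) :
    signOf a ({a, b} : Finset V) + signOf b ({a, b} : Finset V) = 0 := by
  rcases lt_or_gt_of_ne h with hl | hl
  · rw [signOf_pair_left hl, signOf_pair_right hl]; ring
  · rw [Finset.pair_comm a b, signOf_pair_left hl, signOf_pair_right hl]; ring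


variable {k : Type*} [Field k]

def delta (u : V) : Finset V → k := fun T => if T = {u} then 1 else 0

def echain (a b : V) : Finset V → k :=
  fun T => if T = ({a, b} : Finset V) then (if a < b then 1 else -1) else 0

lemma bdry_add (c c' : Finset V → k) : bdry (c + c') = bdry c + bdry c' := by
  funext S
  simp [bdry, Finset.sum_add_distrib, smul_add]

lemma bdry_zero : bdry (0 : Finset V → k) = 0 := by
  funext S; simp [bdry]

lemma bdry_smul (a : k) (c : Finset V → k) : bdry (a • c) = a • bdry c := by
  funext S
  simp only [bdry, Pi.smul_apply, Finset.smul_sum]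
  exact Finset.sum_congr rfl fun t _ => smul_comm _ _ _

lemma bdry_sum {ι : Type*} (s : Finset ι) (f : ι → Finset V → k) :
    bdry (∑ i ∈ s, f i) = ∑ i ∈ s, bdry (f i) := by
  classical
  induction s using Finset.induction_on with
  | empty => simpa using (bdry_zero (V := V) (k := k))
  | insert _ _ h ih => rw [Finset.sum_insert h, Finset.sum_insert h, bdry_add, ih]

lemma bdry_one_chain (c : Finset V → k) (hc : ∀ T, c T ≠ 0 → T.card = 1) :
    bdry c = fun S => if S = ∅ then ∑ t : V, c {t} else 0 := by
  funext S
  by_cases hS : S = ∅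
  · subst hS
    simp only [bdry, if_pos rfl, Finset.compl_empty, insert_empty_eq]
    exact Finset.sum_congr rfl fun t _ => by rw [signOf_single, one_smul]
  · rw [if_neg hS]
    apply Finset.sum_eq_zero
    intro t ht
    have : c (insert t S) = 0 := by
      by_contra hne
      have h1 := hc _ hne
      have ht' : t ∉ S := by simpa using ht
      rw [Finset.card_insert_of_notMem ht'] at h1
      have : S = ∅ := Finset.card_eq_zero.mp (by omega)
      exact hS this
    rw [this, smul_zero]

lemma bdry_vertex (u : V) (a : k) :
    bdry (fun T => if T = {u} then a else 0) = fun S => if S = ∅ then a else 0 := by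
  rw [bdry_one_chain]
  · funext S
    by_cases hS : S = ∅
    · simp only [if_pos hS]
      rw [Finset.sum_eq_single_of_mem u (Finset.mem_univ u)]
      · simp
      · intro b _ hb
        rw [if_neg (by simpa [Finset.singleton_inj] using hb)]
    · simp [if_neg hS]
  · intro T hT
    by_cases h : T = {u}
    · subst h; simp
    · simp [h] at hT

lemma signOf_smul_eps {a b : V} (h : a ≠ b) :
    signOf b ({a, b} : Finset V) • (if a < b then (1:k) else -1) = -1 := by
  rcases lt_or_gt_of_ne h with hl | hl
  · rw [signOf_pair_right hl, if_pos hl]; norm_num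
  · rw [Finset.pair_comm, signOf_pair_left hl, if_neg (asymm hl)]; norm_num

lemma signOf_smul_eps' {a b : V} (h : a ≠ b) :
    signOf a ({a, b} : Finset V) • (if a < b then (1:k) else -1) = 1 := by
  rcases lt_or_gt_of_ne h with hl | hl
  · rw [signOf_pair_left hl, if_pos hl]; norm_num
  · rw [Finset.pair_comm, signOf_pair_right hl, if_neg (asymm hl)]; norm_num

lemma bdry_echain {a b : V} (h : a ≠ b) :
    bdry (echain a b : Finset V → k) = delta b - delta a := by
  funext S
  have hsub : ∀ t : V, t ∉ S → (echain (k := k) a b (insert t S)) ≠ 0 →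
      insert t S = ({a, b} : Finset V) := by
    intro t ht hne
    by_contra hc
    exact hne (by simp [echain, hc])
  by_cases hSa : S = {a}
  · subst hSa
    have hb : b ∈ ({a} : Finset V)ᶜ := by simp [Ne.symm h]
    simp only [bdry]
    rw [Finset.sum_eq_single_of_mem b hb]
    · have : insert b ({a} : Finset V) = ({a, b} : Finset V) := Finset.pair_comm b a
      rw [this]
      have : (echain (k := k) a b ({a, b} : Finset V)) = (if a < b then (1:k) else -1) := by
        simp [echain]
      rw [this, signOf_smul_eps h]
      simp [delta, Pi.sub_apply, Finset.singleton_ne_empty,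
        (Finset.singleton_inj (a := a) (b := b)).not.mpr h]
    · intro t htmem htb
      have hta : t ≠ a := by simpa using htmem
      have : (echain (k := k) a b (insert t ({a} : Finset V))) = 0 := by
        by_contra hne
        have := hsub t (by simpa using htmem) hne
        have : t ∈ ({a, b} : Finset V) := this ▸ Finset.mem_insert_self t {a}
        simp [hta, htb] at this
      rw [this, smul_zero]
  · by_cases hSb : S = {b}
    · subst hSb
      have ha : a ∈ ({b} : Finset V)ᶜ := by simp [h]
      simp only [bdry]
      rw [Finset.sum_eq_single_of_mem a ha]
      · have : insert a ({b} : Finset V) = ({a, b} : Finset V) := rfl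
        rw [this]
        have : (echain (k := k) a b ({a, b} : Finset V)) = (if a < b then (1:k) else -1) := by
          simp [echain]
        rw [this, signOf_smul_eps' h]
        simp [delta, Pi.sub_apply,
          (Finset.singleton_inj (a := b) (b := a)).not.mpr (Ne.symm h)]
      · intro t htmem htb
        have hta : t ≠ b := by simpa using htmem
        have : (echain (k := k) a b (insert t ({b} : Finset V))) = 0 := by
          by_contra hne
          have := hsub t (by simpa using htmem) hne
          have : t ∈ ({a, b} : Finset V) := this ▸ Finset.mem_insert_self t {b}
          simp [hta, htb] at this
        rw [this, smul_zero]
    · have lhs : bdry (echain (k := k) a b : Finset V → k) S = 0 := by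
        simp only [bdry]
        apply Finset.sum_eq_zero
        intro t ht
        have ht' : t ∉ S := by simpa using ht
        have : (echain (k := k) a b (insert t S)) = 0 := by
          by_contra hne
          have heq := hsub t ht' hne
          have hcard : S.card = 1 := by
            have := congrArg Finset.card heq
            rw [Finset.card_insert_of_notMem ht', Finset.card_pair h] at this
            omega
          obtain ⟨x, rfl⟩ := Finset.card_eq_one.mp hcard
          have hx : x ∈ ({a, b} : Finset V) := heq ▸ (by simp)
          rcases Finset.mem_insert.mp hx with rfl | hx
          · exact hSa rfl
          · rw [Finset.mem_singleton.mp hx] at hSb; exact hSb rfl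
        rw [this, smul_zero]
      rw [lhs]
      simp [delta, Pi.sub_apply, hSa, hSb]

/-- chain of a walk -/
lemma exists_pathchain {E : Set (Finset V)} {u w : V}
    (h : Relation.ReflTransGen (adjRel E) u w) :
    ∃ b : Finset V → k, (∀ T, b T ≠ 0 → T ∈ E) ∧ bdry b = delta w - delta u := by
  induction h with
  | refl => exact ⟨0, fun T hT => absurd rfl hT, by rw [bdry_zero]; simp⟩
  | @tail x y hux hadj ih =>
      obtain ⟨b, hbE, hbd⟩ := ih
      refine ⟨b + echain x y, ?_, ?_⟩
      · intro T hT
        by_cases hb0 : b T = 0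
        · have : (echain (k := k) x y T) ≠ 0 := by
            intro h0; exact hT (by simp [Pi.add_apply, hb0, h0])
          have : T = ({x, y} : Finset V) := by
            by_contra hc; exact this (by simp [echain, hc])
          exact this ▸ hadj.2
        · exact hbE T hb0
      · rw [bdry_add, hbd, bdry_echain hadj.1]
        abel

/-- connectivity implies vanishing of H̃₀ -/
lemma homologyVanishes_one {L : Set (Finset V)}
    (hconn : ∀ u, ({u} : Finset V) ∈ L → ∀ w, ({w} : Finset V) ∈ L →
      Relation.ReflTransGen (adjRel {S | S ∈ L ∧ S.card = 2}) u w)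
    {u0 : V} (hu0 : ({u0} : Finset V) ∈ L) :
    ∀ c : Finset V → k, (∀ T, c T ≠ 0 → T ∈ L ∧ T.card = 1) → bdry c = 0 →
      ∃ b : Finset V → k, (∀ T, b T ≠ 0 → T ∈ L ∧ T.card = 2) ∧ bdry b = c := by
  intro c hc hcyc
  have hsum : ∑ t : V, c {t} = 0 := by
    have h1 := (bdry_one_chain c (fun T hT => (hc T hT).2)).symm.trans hcyc
    have h2 := congrFun h1 ∅
    simpa using h2
  have hbt : ∀ t : V, ∃ bt : Finset V → k, (∀ T, bt T ≠ 0 → T ∈ L ∧ T.card = 2) ∧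
      bdry bt = c {t} • ((delta t : Finset V → k) - delta u0) := by
    intro t
    by_cases h0 : c {t} = 0
    · exact ⟨0, fun T hT => absurd rfl hT, by rw [bdry_zero, h0, zero_smul]⟩
    · have htL : ({t} : Finset V) ∈ L := (hc _ h0).1
      obtain ⟨b, hbE, hbd⟩ := exists_pathchain (k := k) (hconn u0 hu0 t htL)
      refine ⟨c {t} • b, ?_, by rw [bdry_smul, hbd]⟩
      intro T hT
      have : b T ≠ 0 := by intro h'; simp [Pi.smul_apply, h'] at hT
      exact hbE T this
  choose bt hbtE hbtd using hbt
  refine ⟨∑ t : V, bt t, ?_, ?_⟩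
  · intro T hT
    have : ∃ t : V, bt t T ≠ 0 := by
      by_contra hz
      push_neg at hz
      exact hT (by simp [Finset.sum_apply, hz])
    obtain ⟨t, ht⟩ := this
    exact hbtE t T ht
  · rw [bdry_sum]
    funext S
    rw [Finset.sum_apply]
    simp only [hbtd]
    have : ∀ t : V, ((c {t} • ((delta t : Finset V → k) - delta u0) : Finset V → k)) S
        = c {t} * (if S = ({t} : Finset V) then 1 else 0)
          - c {t} * (if S = ({u0} : Finset V) then 1 else 0) := by
      intro t
      simp [delta, Pi.smul_apply, Pi.sub_apply, smul_eq_mul, mul_sub]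
    rw [Finset.sum_congr rfl (fun t _ => this t), Finset.sum_sub_distrib, ← Finset.sum_mul,
      hsum, zero_mul, sub_zero]
    by_cases hS : ∃ s : V, S = {s}
    · obtain ⟨s, rfl⟩ := hS
      rw [Finset.sum_eq_single_of_mem s (Finset.mem_univ s)]
      · simp
      · intro t _ hts
        rw [if_neg (by simpa [Finset.singleton_inj, eq_comm] using hts), mul_zero]
    · push_neg at hS
      have hcS : c S = 0 := by
        by_contra h0
        exact hS _ (Finset.card_eq_one.mp (hc S h0).2).choose_spec
      rw [hcS]
      apply Finset.sum_eq_zero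
      intro t _
      rw [if_neg (hS t), mul_zero]

/-- a boundary relation forces connectivity -/
lemma conn_of_bdry {E : Set (Finset V)} {b : Finset V → k}
    (hbE : ∀ T, b T ≠ 0 → T ∈ E ∧ T.card = 2)
    {u w : V} (hbd : bdry b = (delta u : Finset V → k) - delta w) :
    Relation.ReflTransGen (adjRel E) u w := by
  classical
  by_contra hw
  set C : Finset V := Finset.univ.filter (fun x => Relation.ReflTransGen (adjRel E) u x) with hC
  have huC : u ∈ C := Finset.mem_filter.mpr ⟨Finset.mem_univ u, Relation.ReflTransGen.refl⟩
  have hwC : w ∉ C := fun hc => hw (Finset.mem_filter.mp hc).2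
  have hb1 : ∀ x : V, b ({x} : Finset V) = 0 := by
    intro x
    by_contra h0
    have := (hbE _ h0).2
    simp at this
  have hclosed : ∀ x ∈ C, ∀ t : V, b (insert t ({x} : Finset V)) ≠ 0 → t ∈ C := by
    intro x hx t hbt
    by_cases htx : t = x
    · exact htx ▸ hx
    · have hmem := (hbE _ hbt).1
      have hedge : ({x, t} : Finset V) ∈ E := by
        rwa [Finset.pair_comm x t]
      have hxr : Relation.ReflTransGen (adjRel E) u x := (Finset.mem_filter.mp hx).2
      exact Finset.mem_filter.mpr ⟨Finset.mem_univ t, hxr.tail ⟨fun hh => htx hh.symm, hedge⟩⟩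
  have h1 : ∑ x ∈ C, bdry b ({x} : Finset V) = 1 := by
    have hx : ∀ x : V, bdry b ({x} : Finset V)
        = (if x = u then (1:k) else 0) - (if x = w then (1:k) else 0) := by
      intro x
      rw [hbd]
      simp [delta, Pi.sub_apply, Finset.singleton_inj]
    rw [Finset.sum_congr rfl (fun x _ => hx x), Finset.sum_sub_distrib]
    rw [Finset.sum_ite_eq' C u (fun _ => (1:k)), Finset.sum_ite_eq' C w (fun _ => (1:k))]
    rw [if_pos huC, if_neg hwC, sub_zero]
  have h2 : ∑ x ∈ C, bdry b ({x} : Finset V) = 0 := by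
    simp only [bdry]
    have hinner : ∀ x : V, ∑ t ∈ ({x} : Finset V)ᶜ,
        signOf t (insert t ({x} : Finset V)) • b (insert t ({x} : Finset V))
        = ∑ t : V, signOf t (insert t ({x} : Finset V)) • b (insert t ({x} : Finset V)) := by
      intro x
      apply Finset.sum_subset (Finset.subset_univ _)
      intro t _ ht
      have htx : t = x := by simpa using ht
      subst htx
      rw [Finset.insert_eq_self.mpr (Finset.mem_singleton_self t), hb1, smul_zero]
    rw [Finset.sum_congr rfl (fun x _ => hinner x), ← Finset.sum_product']
    have hrestrict : ∑ p ∈ C ×ˢ (Finset.univ : Finset V),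
        signOf p.2 (insert p.2 ({p.1} : Finset V)) • b (insert p.2 ({p.1} : Finset V))
        = ∑ p ∈ C ×ˢ C,
        signOf p.2 (insert p.2 ({p.1} : Finset V)) • b (insert p.2 ({p.1} : Finset V)) := by
      symm
      apply Finset.sum_subset
      · exact Finset.product_subset_product_right (Finset.subset_univ _)
      · intro p hp hp'
        have hp1 : p.1 ∈ C := (Finset.mem_product.mp hp).1
        have hp2 : p.2 ∉ C := by
          intro hc
          exact hp' (Finset.mem_product.mpr ⟨hp1, hc⟩)
        have : b (insert p.2 ({p.1} : Finset V)) = 0 := by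
          by_contra h0
          exact hp2 (hclosed p.1 hp1 p.2 h0)
        rw [this, smul_zero]
    rw [hrestrict]
    apply Finset.sum_involution (g := fun p _ => (p.2, p.1))
    · intro p hp
      by_cases hpe : p.1 = p.2
      · have : b (insert p.2 ({p.1} : Finset V)) = 0 := by
          rw [hpe, Finset.insert_eq_self.mpr (Finset.mem_singleton_self p.2)]
          exact hb1 p.2
        simp [hpe, hb1]
      · have he1 : insert p.2 ({p.1} : Finset V) = ({p.2, p.1} : Finset V) := rfl
        have he2 : insert p.1 ({p.2} : Finset V) = ({p.2, p.1} : Finset V) :=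
          Finset.pair_comm p.1 p.2
        rw [he1, he2, ← add_smul]
        rw [show signOf p.2 ({p.2, p.1} : Finset V) + signOf p.1 ({p.2, p.1} : Finset V)
          = 0 from signOf_pair_add (fun hh => hpe hh.symm)]
        rw [zero_smul]
    · intro p hp hne
      intro hcontra
      have hpe : p.2 = p.1 := congrArg Prod.fst hcontra
      apply hne
      rw [hpe, Finset.insert_eq_self.mpr (Finset.mem_singleton_self p.1), hb1, smul_zero]
    · intro p hp
      exact Finset.mem_product.mpr ⟨(Finset.mem_product.mp hp).2, (Finset.mem_product.mp hp).1⟩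
    · intro p hp
      rfl
  rw [h1] at h2
  exact one_ne_zero h2

-- new material
lemma cxLink_empty (L : Set (Finset V)) : cxLink L ∅ = L := by
  ext S; simp [cxLink]

lemma vanish_zero {M : Set (Finset V)} {x : V}
    (hx : ({x} : Finset V) ∈ M) : HomologyVanishes k M 0 := by
  intro c hc _
  refine ⟨fun T => if T = {x} then c ∅ else 0, ?_, ?_⟩
  · intro T hT
    have hT' : (if T = {x} then c ∅ else 0) ≠ 0 := hT
    have hTx : T = {x} := by by_contra h; rw [if_neg h] at hT'; exact hT' rfl
    subst hTx
    exact ⟨hx, by simp⟩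
  · rw [bdry_vertex]
    funext S
    by_cases hS : S = ∅
    · subst hS; simp
    · rw [if_neg hS]
      have : c S = 0 := by
        by_contra h0
        exact hS (Finset.card_eq_zero.mp (hc S h0).2)
      rw [this]

lemma isCM_of_graph {L : Set (Finset V)} (hL : IsComplex L)
    (hdim : ∀ S ∈ L, S.card ≤ 2)
    (hedge : ∃ e ∈ L, e.card = 2)
    (hvert : ∀ v : V, ({v} : Finset V) ∈ L → ∃ u, u ≠ v ∧ ({u, v} : Finset V) ∈ L)
    (hconn : ∀ u, ({u} : Finset V) ∈ L → ∀ w, ({w} : Finset V) ∈ L →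
      Relation.ReflTransGen (adjRel {S | S ∈ L ∧ S.card = 2}) u w) :
    IsCM k L := by
  obtain ⟨e, heL, hecard⟩ := hedge
  constructor
  · intro S hS
    by_cases h2 : S.card = 2
    · exact ⟨S, hS, subset_rfl, fun G hG => h2 ▸ hdim G hG⟩
    · by_cases h1 : S.card = 1
      · obtain ⟨v, rfl⟩ := Finset.card_eq_one.mp h1
        obtain ⟨u, hu, huv⟩ := hvert v hS
        refine ⟨{u, v}, huv, by simp, fun G hG => ?_⟩
        rw [Finset.card_pair hu]; exact hdim G hG
      · have h0 : S = ∅ := Finset.card_eq_zero.mp (by have := hdim S hS; omega)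
        subst h0
        exact ⟨e, heL, Finset.empty_subset e, fun G hG => hecard ▸ hdim G hG⟩
  · intro T hT n hn
    have hlinkL : ∀ F ∈ cxLink L T, F.card + T.card ≤ 2 := by
      intro F hF
      have h := hdim _ hF.2.2
      rwa [Finset.card_union_of_disjoint hF.2.1] at h
    obtain ⟨F, hF, hnF⟩ := hn
    by_cases hT2 : T.card = 2
    · exfalso; have := hlinkL F hF; omega
    · by_cases hT1 : T.card = 1
      · have hF1 : F.card = 1 := by have := hlinkL F hF; omega
        have hn0 : n = 0 := by omega
        subst hn0
        obtain ⟨x, rfl⟩ := Finset.card_eq_one.mp hF1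
        exact vanish_zero hF
      · have hT0 : T = ∅ := Finset.card_eq_zero.mp
          (by have := hdim T hT; omega)
        subst hT0
        rw [cxLink_empty] at hF ⊢
        by_cases hn1 : n = 0
        · subst hn1
          obtain ⟨x, hxF⟩ := Finset.card_pos.mp (by omega : 0 < F.card)
          exact vanish_zero (hL.2 F hF {x} (Finset.singleton_subset_iff.mpr hxF))
        · have hn' : n = 1 := by have := hdim F hF; omega
          subst hn'
          intro c hc hcyc
          exact homologyVanishes_one hconn
            (hL.2 F hF {(Finset.card_pos.mp (by omega : 0 < F.card)).choose}
              (Finset.singleton_subset_iff.mpr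
                (Finset.card_pos.mp (by omega : 0 < F.card)).choose_spec))
            c (fun T hT => hc T hT) hcyc

lemma graph_of_isCM {L : Set (Finset V)} (hL : IsComplex L)
    (hdim : ∀ S ∈ L, S.card ≤ 2) (hedge : ∃ e ∈ L, e.card = 2) (hcm : IsCM k L) :
    (∀ v : V, ({v} : Finset V) ∈ L → ∃ u, u ≠ v ∧ ({u, v} : Finset V) ∈ L) ∧
    (∀ u, ({u} : Finset V) ∈ L → ∀ w, ({w} : Finset V) ∈ L →
      Relation.ReflTransGen (adjRel {S | S ∈ L ∧ S.card = 2}) u w) := by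
  obtain ⟨e, heL, he2⟩ := hedge
  constructor
  · intro v hv
    obtain ⟨F, hFL, hvF, hmax⟩ := hcm.1 {v} hv
    have hF2 : F.card = 2 := le_antisymm (hdim F hFL) (he2 ▸ hmax e heL)
    obtain ⟨x, y, hxy, rfl⟩ := Finset.card_eq_two.mp hF2
    have hvm : v ∈ ({x, y} : Finset V) := hvF (Finset.mem_singleton_self v)
    rcases Finset.mem_insert.mp hvm with rfl | hvy
    · exact ⟨y, hxy.symm, by rwa [Finset.pair_comm]⟩
    · obtain rfl := Finset.mem_singleton.mp hvy
      exact ⟨x, hxy, hFL⟩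
  · intro u hu w hw
    have hhom := hcm.2 ∅ hL.1 1 ⟨e, (cxLink_empty L).symm ▸ heL, by omega⟩
    rw [cxLink_empty] at hhom
    by_cases huw : u = w
    · exact huw ▸ Relation.ReflTransGen.refl
    · have hchain : IsChainOn k L 1 ((delta u : Finset V → k) - delta w) := by
        intro T hT
        by_cases hTu : T = {u}
        · subst hTu; exact ⟨hu, by simp⟩
        · by_cases hTw : T = {w}
          · subst hTw; exact ⟨hw, by simp⟩
          · exfalso; apply hT; simp [delta, Pi.sub_apply, hTu, hTw]
      have hcyc : bdry ((delta u : Finset V → k) - delta w) = 0 := by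
        rw [bdry_one_chain _ (fun T hT => (hchain T hT).2)]
        funext S
        by_cases hS : S = ∅
        · subst hS
          rw [if_pos rfl]
          simp [delta, Pi.sub_apply, Finset.singleton_inj, Finset.sum_sub_distrib]
        · rw [if_neg hS]; rfl
      obtain ⟨b, hb, hbd⟩ := hhom _ hchain hcyc
      exact conn_of_bdry (E := {S | S ∈ L ∧ S.card = 2}) (fun T hT => ⟨⟨(hb T hT).1, (hb T hT).2⟩, (hb T hT).2⟩) hbd


end ChainLemmas

/-- the deleted complex is a complex, and related bookkeeping -/
lemma delComplex_isComplex {K : Set (Finset V)} (hK : IsComplex K) (v : V) :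
    IsComplex {S | S ∈ K ∧ v ∉ S} :=
  ⟨⟨hK.1, Finset.notMem_empty v⟩,
   fun S hS T hT => ⟨hK.2 S hS.1 T hT, fun hvT => hS.2 (hT hvT)⟩⟩

lemma delEdges_eq {K : Set (Finset V)} (v : V) :
    {S | S ∈ {S | S ∈ K ∧ v ∉ S} ∧ S.card = 2}
      = {e ∈ {S | S ∈ K ∧ S.card = 2} | v ∉ e} := by
  ext S
  simp only [Set.mem_setOf_eq, Set.mem_sep_iff]
  tauto

/-- A 1-dimensional finite simplicial complex `K` is doubly
Cohen–Macaulay over a field `k` if and only if its graph `G(K)` — whose vertices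
are the vertices of `K` and whose edges are the 1-dimensional faces of `K` — is
2-connected. -/
theorem one_dimensional_2CM_iff_two_connected
    {V : Type*} [Fintype V] [LinearOrder V] (k : Type*) [Field k]
    (K : Set (Finset V))
    (hK : IsComplex K)
    (hdim : (∀ S ∈ K, S.card ≤ 2) ∧ ∃ S ∈ K, S.card = 2) :
    Is2CM k K ↔ TwoConnected {v : V | ({v} : Finset V) ∈ K} {S | S ∈ K ∧ S.card = 2} := by
  obtain ⟨hdim1, hedgeK⟩ := hdim
  have hvertsub : ∀ S ∈ K, ∀ x ∈ S, ({x} : Finset V) ∈ K :=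
    fun S hS x hx => hK.2 S hS {x} (Finset.singleton_subset_iff.mpr hx)
  constructor
  · -- Is2CM → TwoConnected
    rintro ⟨hcm, h2⟩ v hv
    obtain ⟨hcmv, hdimv⟩ := h2 v hv
    have hLcx := delComplex_isComplex hK v
    have hLdim : ∀ S ∈ {S | S ∈ K ∧ v ∉ S}, S.card ≤ 2 := fun S hS => hdim1 S hS.1
    have hLedge : ∃ e ∈ {S | S ∈ K ∧ v ∉ S}, e.card = 2 := by
      obtain ⟨S, hS, hS2⟩ := hedgeK
      obtain ⟨F, hF, hvF, hle⟩ := hdimv S hS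
      exact ⟨F, ⟨hF, hvF⟩, le_antisymm (hdim1 F hF) (hS2 ▸ hle)⟩
    obtain ⟨hvertL, hconnL⟩ := graph_of_isCM (k := k) hLcx hLdim hLedge hcmv
    have hmemL : ∀ u : V, ({u} : Finset V) ∈ {S | S ∈ K ∧ v ∉ S} ↔
        u ∈ ({v : V | ({v} : Finset V) ∈ K} \ {v}) := by
      intro u
      simp only [Set.mem_setOf_eq, Set.mem_diff, Set.mem_singleton_iff,
        Finset.mem_singleton]
      constructor
      · rintro ⟨h1, h2⟩; exact ⟨h1, fun h => h2 (by simp [h])⟩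
      · rintro ⟨h1, h2⟩; exact ⟨h1, by simp [Ne.symm h2]⟩
    obtain ⟨f, hfL, hf2⟩ := hLedge
    obtain ⟨a, b, hab, rfl⟩ := Finset.card_eq_two.mp hf2
    have haL : ({a} : Finset V) ∈ {S | S ∈ K ∧ v ∉ S} :=
      hLcx.2 _ hfL {a} (by simp)
    have hbL : ({b} : Finset V) ∈ {S | S ∈ K ∧ v ∉ S} :=
      hLcx.2 _ hfL {b} (by simp)
    constructor
    · exact (Set.one_lt_ncard (Set.toFinite _)).mpr
        ⟨a, (hmemL a).mp haL, b, (hmemL b).mp hbL, hab⟩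
    · refine ⟨⟨a, (hmemL a).mp haL⟩, fun u hu w hw => ?_⟩
      have := hconnL u ((hmemL u).mpr hu) w ((hmemL w).mpr hw)
      rwa [delEdges_eq] at this
  · -- TwoConnected → Is2CM
    intro htc
    have hedgeAt : ∀ v u : V, ({v} : Finset V) ∈ K → ({u} : Finset V) ∈ K → u ≠ v →
        ∃ y, y ≠ u ∧ ({u, y} : Finset V) ∈ K ∧ ({u, y} : Finset V).card = 2
          ∧ v ∉ ({u, y} : Finset V) := by
      intro v u hv hu huv
      obtain ⟨h2, hconn⟩ := htc v hv
      have huW : u ∈ ({v : V | ({v} : Finset V) ∈ K} \ {v}) := ⟨hu, huv⟩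
      obtain ⟨a, ha, b, hb, hab⟩ := (Set.one_lt_ncard (Set.toFinite _)).mp h2
      have hw : ∃ w, w ∈ ({v : V | ({v} : Finset V) ∈ K} \ {v}) ∧ w ≠ u := by
        by_cases hau : a = u
        · exact ⟨b, hb, fun h => hab (hau ▸ h ▸ rfl)⟩
        · exact ⟨a, ha, hau⟩
      obtain ⟨w, hwmem, hwu⟩ := hw
      rcases (hconn.2 u huW w hwmem).cases_head with heq | ⟨y, hy, _⟩
      · exact absurd heq.symm hwu
      · exact ⟨y, Ne.symm hy.1, hy.2.1.1, hy.2.1.2, hy.2.2⟩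
    have hWtriple : ∀ v : V, ({v} : Finset V) ∈ K →
        ∃ u, ({u} : Finset V) ∈ K ∧ u ≠ v := by
      intro v hv
      obtain ⟨a, ha, _, _, _⟩ := (Set.one_lt_ncard (Set.toFinite _)).mp (htc v hv).1
      exact ⟨a, ha.1, fun h => ha.2 (by simp [h])⟩
    have hvert : ∀ x : V, ({x} : Finset V) ∈ K →
        ∃ u, u ≠ x ∧ ({u, x} : Finset V) ∈ K := by
      intro x hx
      obtain ⟨v, hvK, hvx⟩ := hWtriple x hx
      obtain ⟨y, hyx, hyK, _, _⟩ := hedgeAt v x hvK hx (Ne.symm hvx)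
      exact ⟨y, hyx, by rwa [Finset.pair_comm]⟩
    have hconn : ∀ u, ({u} : Finset V) ∈ K → ∀ w, ({w} : Finset V) ∈ K →
        Relation.ReflTransGen (adjRel {S | S ∈ K ∧ S.card = 2}) u w := by
      intro u hu w hw
      obtain ⟨a, ha, b, hb, hab⟩ := (Set.one_lt_ncard (Set.toFinite _)).mp (htc u hu).1
      have hv : ∃ x, x ∈ ({v : V | ({v} : Finset V) ∈ K} \ {u}) ∧ x ≠ w := by
        by_cases haw : a = w
        · exact ⟨b, hb, fun h => hab (haw ▸ h ▸ rfl)⟩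
        · exact ⟨a, ha, haw⟩
      obtain ⟨x, hxmem, hxw⟩ := hv
      have hwalk := (htc x hxmem.1).2.2 u
        ⟨hu, fun h => hxmem.2 (by simp [Set.mem_singleton_iff.mp h])⟩ w
        ⟨hw, fun h => hxw (Set.mem_singleton_iff.mp h).symm⟩
      exact Relation.ReflTransGen.mono (p := adjRel {S | S ∈ K ∧ S.card = 2}) (fun p q (hpq : adjRel {e | e ∈ {S | S ∈ K ∧ S.card = 2} ∧ x ∉ e} p q) => (⟨hpq.1, hpq.2.1⟩ : adjRel {S | S ∈ K ∧ S.card = 2} p q)) u w hwalk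
    refine ⟨isCM_of_graph hK hdim1 hedgeK hvert hconn, fun v hv => ?_⟩
    have hLcx := delComplex_isComplex hK v
    have hLdim : ∀ S ∈ {S | S ∈ K ∧ v ∉ S}, S.card ≤ 2 := fun S hS => hdim1 S hS.1
    have hLedge : ∃ e ∈ {S | S ∈ K ∧ v ∉ S}, e.card = 2 := by
      obtain ⟨u, huK, huv⟩ := hWtriple v hv
      obtain ⟨y, _, hyK, hy2, hvy⟩ := hedgeAt v u hv huK huv
      exact ⟨{u, y}, ⟨hyK, hvy⟩, hy2⟩
    have hmemL : ∀ u : V, ({u} : Finset V) ∈ {S | S ∈ K ∧ v ∉ S} →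
        ({u} : Finset V) ∈ K ∧ u ≠ v := by
      intro u hu
      exact ⟨hu.1, fun h => hu.2 (by simp [h])⟩
    have hvertL : ∀ x : V, ({x} : Finset V) ∈ {S | S ∈ K ∧ v ∉ S} →
        ∃ u, u ≠ x ∧ ({u, x} : Finset V) ∈ {S | S ∈ K ∧ v ∉ S} := by
      intro x hx
      obtain ⟨hxK, hxv⟩ := hmemL x hx
      obtain ⟨y, hyx, hyK, _, hvy⟩ := hedgeAt v x hv hxK hxv
      refine ⟨y, hyx, ?_⟩
      rw [Finset.pair_comm y x]
      exact ⟨hyK, hvy⟩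
    have hconnL : ∀ u, ({u} : Finset V) ∈ {S | S ∈ K ∧ v ∉ S} →
        ∀ w, ({w} : Finset V) ∈ {S | S ∈ K ∧ v ∉ S} →
        Relation.ReflTransGen
          (adjRel {S | S ∈ {S | S ∈ K ∧ v ∉ S} ∧ S.card = 2}) u w := by
      intro u hu w hw
      obtain ⟨huK, huv⟩ := hmemL u hu
      obtain ⟨hwK, hwv⟩ := hmemL w hw
      have := (htc v hv).2.2 u ⟨huK, by simp [huv]⟩ w ⟨hwK, by simp [hwv]⟩
      rwa [← delEdges_eq] at this
    refine ⟨isCM_of_graph hLcx hLdim hLedge hvertL hconnL, fun S hS => ?_⟩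
    obtain ⟨e, heL, he2⟩ := hLedge
    exact ⟨e, heL.1, heL.2, he2 ▸ hdim1 S hS⟩


end Paper2CM
end

section
/- Let d ≥ 1 and let G_1,…,G_m be finite simple graphs, each generically d-rigid, such that for every 1 < i ≤ m, the intersection G_i ∩ (G_1 ∪ ⋯ ∪ G_{i−1}) contains at least d vertices. Then the union G_1 ∪ ⋯ ∪ G_m is generically d-rigid. -/
set_option linter.unusedSectionVars false
set_option linter.unusedVariables false
set_option maxHeartbeats 1000000

open Matrix BigOperators


namespace Paper2CM

variable {V : Type*} [Fintype V] [DecidableEq V]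

open Classical in
/-- The rigidity matrix of the graph with edge set `E` (a set of 2-element subsets)
with respect to `f : V → ℝ^d`.  Rows are indexed by `V × Fin d`; columns are indexed
by ordered pairs `(u, w)`: the column of an edge `{u, w}` carries `f u − f w` in the
rows of `u`, `f w − f u` in the rows of `w`, and zeros elsewhere (duplicating each
edge column up to sign does not change the rank). -/
noncomputable def rigidityMatrix (d : ℕ) (E : Set (Finset V)) (f : V → Fin d → ℝ) :
    Matrix (V × Fin d) (V × V) ℝ :=
  fun p e =>
    if e.1 ≠ e.2 ∧ ({e.1, e.2} : Finset V) ∈ E then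
      if p.1 = e.1 then f e.1 p.2 - f e.2 p.2
      else if p.1 = e.2 then f e.2 p.2 - f e.1 p.2
      else 0
    else 0

/-- The maximal (generic) rank of the rigidity matrix over all `d`-embeddings. -/
noncomputable def maxRigRank (d : ℕ) (E : Set (Finset V)) : ℕ :=
  ⨆ f : V → Fin d → ℝ, (rigidityMatrix d E f).rank

/-- A graph with vertex set `W` and edge set `E` is generically `d`-rigid if the
generic rank of its rigidity matrix equals that of the complete graph on `W`. -/
def GenericallyRigid (d : ℕ) (W : Set V) (E : Set (Finset V)) : Prop :=
  maxRigRank d E = maxRigRank d {e : Finset V | e.card = 2 ∧ ∀ x ∈ e, x ∈ W}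





lemma dot_sum_smul {ι κ : Type*} [Fintype ι] [Fintype κ] (g : ι → κ → ℝ) (c : ι → ℝ) (k : κ) :
    (∑ i, c i • g i) k = ∑ i, c i * g i k := by
  simp [Finset.sum_apply]

lemma gram_det_ne_zero_iff {ι κ : Type*} [Fintype ι] [DecidableEq ι] [Fintype κ]
    (g : ι → κ → ℝ) :
    (Matrix.of fun i j => g i ⬝ᵥ g j).det ≠ 0 ↔ LinearIndependent ℝ g := by
  classical
  set N : Matrix ι κ ℝ := Matrix.of g with hN
  have hG : (Matrix.of fun i j => g i ⬝ᵥ g j) = N * Nᵀ := by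
    ext i j; simp [Matrix.mul_apply, dotProduct, N]
  have key : ∀ c : ι → ℝ, Matrix.vecMul c N = fun k => ∑ i, c i * g i k := by
    intro c; funext k; simp [Matrix.vecMul, dotProduct, N]
  constructor
  · intro hdet
    rw [Fintype.linearIndependent_iff]
    intro c hc i
    by_contra hci
    have hcne : c ≠ 0 := fun h => hci (by simp [h])
    have : (N * Nᵀ).det = 0 := by
      rw [← Matrix.exists_vecMul_eq_zero_iff]
      refine ⟨c, hcne, ?_⟩
      have h1 : Matrix.vecMul c N = 0 := by
        rw [key]; funext k
        have := congrFun hc k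
        rw [dot_sum_smul] at this
        simpa using this
      rw [← Matrix.vecMul_vecMul, h1, Matrix.zero_vecMul]
    rw [hG] at hdet; exact hdet this
  · intro hind hdet
    rw [hG, ← Matrix.exists_vecMul_eq_zero_iff] at hdet
    obtain ⟨c, hc0, hc⟩ := hdet
    have hw : Matrix.vecMul c N = 0 := by
      have h2 : Matrix.vecMul (Matrix.vecMul c N) Nᵀ = 0 := by
        rw [Matrix.vecMul_vecMul]; exact hc
      set w := Matrix.vecMul c N with hwdef
      have h3 : w ⬝ᵥ w = 0 := by
        have : Matrix.vecMul w Nᵀ ⬝ᵥ c = 0 := by rw [h2]; simp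
        rw [← Matrix.dotProduct_mulVec, Matrix.mulVec_transpose, ← hwdef] at this
        exact this
      exact (dotProduct_self_eq_zero).mp h3
    have : c = 0 := by
      funext i
      refine Fintype.linearIndependent_iff.mp hind c ?_ i
      funext k
      rw [dot_sum_smul]
      exact congrFun hw k
    exact hc0 this

lemma rank_le_maxRigRank (d : ℕ) (E : Set (Finset V)) (f : V → Fin d → ℝ) :
    (rigidityMatrix d E f).rank ≤ maxRigRank d E := by
  refine le_ciSup (f := fun g : V → Fin d → ℝ => (rigidityMatrix d E g).rank) ?_ f
  refine ⟨Fintype.card (V × Fin d), ?_⟩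
  rintro r ⟨g, rfl⟩
  exact Matrix.rank_le_card_height _

lemma exists_rank_eq_maxRigRank (d : ℕ) (E : Set (Finset V)) :
    ∃ f : V → Fin d → ℝ, (rigidityMatrix d E f).rank = maxRigRank d E := by
  have h : maxRigRank d E ∈ Set.range (fun f : V → Fin d → ℝ => (rigidityMatrix d E f).rank) := by
    apply Nat.sSup_mem
    · exact ⟨(rigidityMatrix d E (fun _ _ => 0)).rank, ⟨_, rfl⟩⟩
    · refine ⟨Fintype.card (V × Fin d), ?_⟩
      rintro r ⟨g, rfl⟩
      exact Matrix.rank_le_card_height _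
  obtain ⟨f, hf⟩ := h
  exact ⟨f, hf⟩

open MvPolynomial in
open Classical in
noncomputable def rigPoly (d : ℕ) (E : Set (Finset V)) :
    Matrix (V × Fin d) (V × V) (MvPolynomial (V × Fin d) ℝ) :=
  fun p e =>
    if e.1 ≠ e.2 ∧ ({e.1, e.2} : Finset V) ∈ E then
      if p.1 = e.1 then X (e.1, p.2) - X (e.2, p.2)
      else if p.1 = e.2 then X (e.2, p.2) - X (e.1, p.2)
      else 0
    else 0

lemma rigPoly_eval (d : ℕ) (E : Set (Finset V)) (f : V → Fin d → ℝ) (p : V × Fin d) (e : V × V) :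
    MvPolynomial.eval (fun q : V × Fin d => f q.1 q.2) (rigPoly d E p e) =
      rigidityMatrix d E f p e := by
  classical
  simp only [rigPoly, rigidityMatrix]
  split_ifs <;> simp

lemma exists_rank_cert (d : ℕ) (E : Set (Finset V)) :
    ∃ p : MvPolynomial (V × Fin d) ℝ, p ≠ 0 ∧
      ∀ f : V → Fin d → ℝ, MvPolynomial.eval (fun q : V × Fin d => f q.1 q.2) p ≠ 0 →
        (rigidityMatrix d E f).rank = maxRigRank d E := by
  classical
  obtain ⟨f₀, hf₀⟩ := exists_rank_eq_maxRigRank d E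
  set M₀ := rigidityMatrix d E f₀ with hM₀
  obtain ⟨b, hbt, hspan, hind⟩ := exists_linearIndependent ℝ (Set.range M₀ᵀ)
  have hbfin : b.Finite := (Set.finite_range _).subset hbt
  haveI : Fintype b := hbfin.fintype
  have hcardb : b.toFinset.card = maxRigRank d E := by
    have h1 : Module.finrank ℝ (Submodule.span ℝ b) = b.toFinset.card :=
      finrank_span_set_eq_card hind
    have h2 : M₀.rank = Module.finrank ℝ (Submodule.span ℝ (Set.range M₀ᵀ)) :=
      M₀.rank_eq_finrank_span_cols
    rw [← hf₀, h2, ← hspan, h1]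
  have hsurj : ∀ x : b, ∃ e : V × V, M₀ᵀ e = (x : (V × Fin d) → ℝ) := fun x => hbt x.2
  choose h hh using hsurj
  set G : Matrix b b (MvPolynomial (V × Fin d) ℝ) :=
    Matrix.of (fun x y : b => ∑ q : V × Fin d, rigPoly d E q (h x) * rigPoly d E q (h y)) with hG
  have hGe : ∀ f : V → Fin d → ℝ, MvPolynomial.eval (fun q : V × Fin d => f q.1 q.2) G.det =
      (Matrix.of fun x y : b =>
        (rigidityMatrix d E f)ᵀ (h x) ⬝ᵥ (rigidityMatrix d E f)ᵀ (h y)).det := by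
    intro f
    rw [RingHom.map_det]
    congr 1
    ext x y
    simp [hG, Matrix.map_apply, map_sum, rigPoly_eval, dotProduct, Matrix.transpose_apply]
  refine ⟨G.det, ?_, ?_⟩
  · intro hp0
    have h0 : MvPolynomial.eval (fun q : V × Fin d => f₀ q.1 q.2) G.det ≠ 0 := by
      rw [hGe f₀]
      have : (Matrix.of fun x y : b =>
          (rigidityMatrix d E f₀)ᵀ (h x) ⬝ᵥ (rigidityMatrix d E f₀)ᵀ (h y)) =
          (Matrix.of fun x y : b => (x : (V × Fin d) → ℝ) ⬝ᵥ (y : (V × Fin d) → ℝ)) := by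
        ext x y
        simp only [Matrix.of_apply, ← hM₀, hh]
      rw [this]
      exact (gram_det_ne_zero_iff _).mpr hind
    rw [hp0] at h0
    simp at h0
  · intro f hne
    rw [hGe f] at hne
    have hindf : LinearIndependent ℝ (fun x : b => (rigidityMatrix d E f)ᵀ (h x)) :=
      (gram_det_ne_zero_iff _).mp hne
    refine le_antisymm (rank_le_maxRigRank d E f) ?_
    rw [← hcardb]
    have hsub : Submodule.span ℝ (Set.range (fun x : b => (rigidityMatrix d E f)ᵀ (h x))) ≤
        Submodule.span ℝ (Set.range (rigidityMatrix d E f)ᵀ) := by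
      apply Submodule.span_mono
      rintro _ ⟨x, rfl⟩
      exact ⟨h x, rfl⟩
    have h1 := Submodule.finrank_mono hsub
    rw [finrank_span_eq_card hindf] at h1
    rw [(rigidityMatrix d E f).rank_eq_finrank_span_cols, Set.toFinset_card]
    exact h1

lemma exists_indep_cert (d : ℕ) {ι : Type*} [Fintype ι] [DecidableEq ι] (a : ι → V) (w : V)
    (hinj : Function.Injective a) (hw : ∀ i, a i ≠ w) (hcard : Fintype.card ι ≤ d) :
    ∃ p : MvPolynomial (V × Fin d) ℝ, p ≠ 0 ∧
      ∀ f : V → Fin d → ℝ, MvPolynomial.eval (fun q : V × Fin d => f q.1 q.2) p ≠ 0 →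
        LinearIndependent ℝ (fun i => f (a i) - f w) := by
  classical
  set G : Matrix ι ι (MvPolynomial (V × Fin d) ℝ) :=
    Matrix.of (fun i j : ι => ∑ k : Fin d,
      (MvPolynomial.X (a i, k) - MvPolynomial.X (w, k)) *
      (MvPolynomial.X (a j, k) - MvPolynomial.X (w, k))) with hG
  have hGe : ∀ f : V → Fin d → ℝ, MvPolynomial.eval (fun q : V × Fin d => f q.1 q.2) G.det =
      (Matrix.of fun i j : ι => (f (a i) - f w) ⬝ᵥ (f (a j) - f w)).det := by
    intro f
    rw [RingHom.map_det]
    congr 1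
    ext i j
    simp [hG, Matrix.map_apply, map_sum, dotProduct]
  refine ⟨G.det, ?_, ?_⟩
  · intro hp0
    obtain ⟨emb⟩ : Nonempty (ι ↪ Fin d) := Function.Embedding.nonempty_of_card_le (by simpa using hcard)
    set f₀ : V → Fin d → ℝ :=
      Function.extend a (fun i => Pi.single (emb i) 1) (fun _ => 0) with hf₀
    have hfa : ∀ i, f₀ (a i) = Pi.single (emb i) 1 := fun i => hinj.extend_apply _ _ i
    have hfw : f₀ w = 0 := by
      rw [hf₀, Function.extend_apply']
      rintro ⟨i, hi⟩
      exact hw i hi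
    have hfam : (fun i => f₀ (a i) - f₀ w) = fun i => Pi.single (emb i) (1 : ℝ) := by
      funext i; rw [hfa, hfw, sub_zero]
    have hindep : LinearIndependent ℝ (fun i => f₀ (a i) - f₀ w) := by
      rw [hfam]
      have := (Pi.basisFun ℝ (Fin d)).linearIndependent.comp emb emb.injective
      simpa [Function.comp_def, Pi.basisFun_apply] using this
    have h0 : MvPolynomial.eval (fun q : V × Fin d => f₀ q.1 q.2) G.det ≠ 0 := by
      rw [hGe f₀]
      exact (gram_det_ne_zero_iff _).mpr hindep
    rw [hp0] at h0
    simp at h0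
  · intro f hne
    rw [hGe f] at hne
    exact (gram_det_ne_zero_iff _).mp hne

lemma exists_common_generic (d : ℕ) {ι : Type*} [Fintype ι]
    (P : ι → (V → Fin d → ℝ) → Prop)
    (h : ∀ i, ∃ p : MvPolynomial (V × Fin d) ℝ, p ≠ 0 ∧
      ∀ f : V → Fin d → ℝ, MvPolynomial.eval (fun q : V × Fin d => f q.1 q.2) p ≠ 0 → P i f) :
    ∃ f : V → Fin d → ℝ, ∀ i, P i f := by
  classical
  choose p hp hP using h
  have hprod : (∏ i, p i) ≠ 0 := Finset.prod_ne_zero_iff.mpr (fun i _ => hp i)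
  have hex : ∃ x : (V × Fin d) → ℝ, MvPolynomial.eval x (∏ i, p i) ≠ 0 := by
    by_contra hall
    push_neg at hall
    exact hprod (MvPolynomial.funext (fun x => by rw [hall x]; simp))
  obtain ⟨x, hx⟩ := hex
  refine ⟨fun v k => x (v, k), fun i => ?_⟩
  have hxf : (fun q : V × Fin d => x (q.1, q.2)) = x := by funext q; rfl
  apply hP i
  rw [hxf]
  rw [map_prod] at hx
  exact Finset.prod_ne_zero_iff.mp hx i (Finset.mem_univ i)

noncomputable def flex (d : ℕ) (E : Set (Finset V)) (f : V → Fin d → ℝ) :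
    Submodule ℝ ((V × Fin d) → ℝ) :=
  LinearMap.ker (rigidityMatrix d E f)ᵀ.mulVecLin

lemma sum_pair_rows {d : ℕ} (u w : V) (huw : u ≠ w) (α β : Fin d → ℝ) (x : (V × Fin d) → ℝ)
    (g : V × Fin d → ℝ)
    (hg : ∀ p : V × Fin d, g p = if p.1 = u then α p.2 else if p.1 = w then β p.2 else 0) :
    (∑ p : V × Fin d, g p * x p) = ∑ k, (α k * x (u, k) + β k * x (w, k)) := by
  rw [Finset.sum_congr rfl (fun p _ => by rw [hg p])]
  rw [Fintype.sum_prod_type]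
  have key : ∀ a : V, (∑ k, (if a = u then α k else if a = w then β k else 0) * x (a, k))
      = (if a = u then ∑ k, α k * x (u, k) else 0)
        + (if a = w then ∑ k, β k * x (w, k) else 0) := by
    intro a
    by_cases h1 : a = u
    · subst h1
      have h2 : ¬ a = w := huw
      simp [h2]
    · by_cases h2 : a = w
      · subst h2; simp [h1]
      · simp [h1, h2]
  rw [Finset.sum_congr rfl (fun a _ => key a)]
  rw [Finset.sum_add_distrib]
  rw [Finset.sum_ite_eq' Finset.univ u (fun _ => ∑ k, α k * x (u, k))]
  rw [Finset.sum_ite_eq' Finset.univ w (fun _ => ∑ k, β k * x (w, k))]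
  simp [Finset.sum_add_distrib]

lemma mem_flex_iff (d : ℕ) (E : Set (Finset V)) (f : V → Fin d → ℝ) (x : (V × Fin d) → ℝ) :
    x ∈ flex d E f ↔ ∀ u w : V, u ≠ w → ({u, w} : Finset V) ∈ E →
      (∑ k, (f u k - f w k) * (x (u, k) - x (w, k))) = 0 := by
  classical
  have entry : ∀ (u w : V), u ≠ w → ({u, w} : Finset V) ∈ E → ∀ p : V × Fin d,
      rigidityMatrix d E f p (u, w) =
        (if p.1 = u then (fun k => f u k - f w k) p.2
         else if p.1 = w then (fun k => f w k - f u k) p.2 else 0) := by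
    intro u w huw he p
    simp only [rigidityMatrix]
    rw [if_pos (show (u, w).1 ≠ (u, w).2 ∧ ({(u, w).1, (u, w).2} : Finset V) ∈ E from ⟨huw, he⟩)]
  have comp : ∀ (u w : V), u ≠ w → ({u, w} : Finset V) ∈ E →
      ((rigidityMatrix d E f)ᵀ.mulVecLin x) (u, w)
        = ∑ k, (f u k - f w k) * (x (u, k) - x (w, k)) := by
    intro u w huw he
    have h3 : ((rigidityMatrix d E f)ᵀ.mulVecLin x) (u, w)
        = ∑ p : V × Fin d, rigidityMatrix d E f p (u, w) * x p := by
      simp only [Matrix.mulVecLin_apply, Matrix.mulVec, dotProduct, Matrix.transpose_apply]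
    rw [h3, sum_pair_rows u w huw (fun k => f u k - f w k) (fun k => f w k - f u k) x _
      (entry u w huw he)]
    apply Finset.sum_congr rfl
    intro k _
    ring
  constructor
  · intro hx u w huw he
    have h0 : ((rigidityMatrix d E f)ᵀ.mulVecLin x) (u, w) = 0 :=
      congrFun (show (rigidityMatrix d E f)ᵀ.mulVecLin x = 0 from hx) (u, w)
    rw [comp u w huw he] at h0
    exact h0
  · intro h
    show (rigidityMatrix d E f)ᵀ.mulVecLin x = 0
    funext e
    obtain ⟨u, w⟩ := e
    by_cases hc : u ≠ w ∧ ({u, w} : Finset V) ∈ E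
    · rw [comp u w hc.1 hc.2, h u w hc.1 hc.2]; rfl
    · have h4 : ((rigidityMatrix d E f)ᵀ.mulVecLin x) (u, w)
          = ∑ p : V × Fin d, rigidityMatrix d E f p (u, w) * x p := by
        simp only [Matrix.mulVecLin_apply, Matrix.mulVec, dotProduct, Matrix.transpose_apply]
      rw [h4]
      have : ∀ p : V × Fin d, rigidityMatrix d E f p (u, w) = 0 := by
        intro p
        simp only [rigidityMatrix]
        rw [if_neg hc]
      simp [this]

lemma flex_antitone {d : ℕ} {E E' : Set (Finset V)} (hEE : E ⊆ E') (f : V → Fin d → ℝ) :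
    flex d E' f ≤ flex d E f := by
  intro x hx
  rw [mem_flex_iff] at *
  intro u w huw he
  exact hx u w huw (hEE he)

lemma mem_flex_iUnion_iff {d m : ℕ} (E : Fin m → Set (Finset V)) (f : V → Fin d → ℝ)
    (x : (V × Fin d) → ℝ) :
    x ∈ flex d (⋃ i, E i) f ↔ ∀ i, x ∈ flex d (E i) f := by
  simp only [mem_flex_iff, Set.mem_iUnion]
  constructor
  · intro h i u w huw he
    exact h u w huw ⟨i, he⟩
  · rintro h u w huw ⟨i, he⟩
    exact h i u w huw he

lemma flex_finrank (d : ℕ) (E : Set (Finset V)) (f : V → Fin d → ℝ) :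
    Module.finrank ℝ (flex d E f) + (rigidityMatrix d E f).rank = Fintype.card (V × Fin d) := by
  have h := LinearMap.finrank_range_add_finrank_ker (rigidityMatrix d E f)ᵀ.mulVecLin
  have h2 : Module.finrank ℝ (LinearMap.range (rigidityMatrix d E f)ᵀ.mulVecLin)
      = (rigidityMatrix d E f).rank := by
    rw [← Matrix.rank_transpose]; rfl
  rw [h2] at h
  rw [flex]
  rw [Module.finrank_pi] at h
  omega

lemma flex_eq_of_rank_eq {d : ℕ} {E E' : Set (Finset V)} (hEE : E ⊆ E') (f : V → Fin d → ℝ)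
    (hr : (rigidityMatrix d E f).rank = (rigidityMatrix d E' f).rank) :
    flex d E f = flex d E' f := by
  have h1 := flex_finrank d E f
  have h2 := flex_finrank d E' f
  have hfr : Module.finrank ℝ (flex d E' f) = Module.finrank ℝ (flex d E f) := by omega
  exact (Submodule.eq_of_le_of_finrank_eq (flex_antitone hEE f) hfr).symm

lemma rank_eq_of_flex_eq {d : ℕ} {E E' : Set (Finset V)} {f : V → Fin d → ℝ}
    (h : flex d E f = flex d E' f) :
    (rigidityMatrix d E f).rank = (rigidityMatrix d E' f).rank := by
  have h1 := flex_finrank d E f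
  have h2 := flex_finrank d E' f
  rw [h] at h1
  omega

lemma skew_dot {d : ℕ} {A : Matrix (Fin d) (Fin d) ℝ} (hA : Aᵀ = -A) (z : Fin d → ℝ) :
    z ⬝ᵥ (A *ᵥ z) = 0 := by
  have h1 : z ⬝ᵥ (A *ᵥ z) = -(z ⬝ᵥ (A *ᵥ z)) := by
    calc z ⬝ᵥ (A *ᵥ z) = (Matrix.vecMul z A) ⬝ᵥ z := Matrix.dotProduct_mulVec z A z
    _ = (Aᵀ *ᵥ z) ⬝ᵥ z := by rw [Matrix.mulVec_transpose]
    _ = ((-A) *ᵥ z) ⬝ᵥ z := by rw [hA]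
    _ = -((A *ᵥ z) ⬝ᵥ z) := by rw [Matrix.neg_mulVec, neg_dotProduct]
    _ = -(z ⬝ᵥ (A *ᵥ z)) := by rw [dotProduct_comm]
  linarith

lemma exists_skew {d : ℕ} (i₀ : Fin d) (b w : Fin d → Fin d → ℝ)
    (hind : LinearIndependent ℝ (fun i : {i : Fin d // i ≠ i₀} => b (i : Fin d) - b i₀))
    (hflex : ∀ i j, (b i - b j) ⬝ᵥ (w i - w j) = 0) :
    ∃ A : Matrix (Fin d) (Fin d) ℝ, Aᵀ = -A ∧
      ∀ i, w i = A *ᵥ b i + (w i₀ - A *ᵥ b i₀) := by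
  classical
  set e : Fin d → Fin d → ℝ := fun i => b i - b i₀ with hedef
  set c : Fin d → Fin d → ℝ := fun i => w i - w i₀ with hcdef
  have he0 : e i₀ = 0 := sub_self _
  have hc0 : c i₀ = 0 := sub_self _
  have hec : ∀ i, e i ⬝ᵥ c i = 0 := fun i => hflex i i₀
  have key : ∀ i j, e i ⬝ᵥ c j + e j ⬝ᵥ c i = 0 := by
    intro i j
    have h : (e i - e j) ⬝ᵥ (c i - c j) = 0 := by
      have h3 : e i - e j = b i - b j := by funext r; simp [hedef]
      have h4 : c i - c j = w i - w j := by funext r; simp [hcdef]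
      rw [h3, h4]; exact hflex i j
    simp only [sub_dotProduct, dotProduct_sub] at h
    have h1 := hec i
    have h2 := hec j
    linarith
  -- find a vector orthogonal to all the `e i`
  set M₁ : Matrix (Fin d) (Fin d) ℝ := Matrix.of (fun i k => e i k) with hM₁
  have hdet1 : M₁.det = 0 := by
    apply Matrix.det_eq_zero_of_row_eq_zero i₀
    intro k
    simp [hM₁, he0]
  obtain ⟨n, hn0, hn⟩ := Matrix.exists_mulVec_eq_zero_iff.mpr hdet1
  have hne : ∀ i, e i ⬝ᵥ n = 0 := by
    intro i
    have := congrFun hn i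
    simpa [hM₁, Matrix.mulVec, dotProduct] using this
  have hnn : n ⬝ᵥ n ≠ 0 := fun h => hn0 (dotProduct_self_eq_zero.mp h)
  -- the basis matrix Q
  set Q : Matrix (Fin d) (Fin d) ℝ := Matrix.of (fun r j => if j = i₀ then n r else e j r) with hQdef
  have hdetQ : Q.det ≠ 0 := by
    intro hdet
    obtain ⟨x, hx0, hx⟩ := Matrix.exists_mulVec_eq_zero_iff.mpr hdet
    have hxi₀ : x i₀ = 0 := by
      have h1 : n ⬝ᵥ (Q *ᵥ x) = 0 := by rw [hx]; simp
      rw [Matrix.dotProduct_mulVec] at h1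
      have h2 : Matrix.vecMul n Q = fun j => if j = i₀ then n ⬝ᵥ n else 0 := by
        funext j
        by_cases hj : j = i₀
        · subst hj
          simp [Matrix.vecMul, dotProduct, hQdef]
        · simp only [Matrix.vecMul, dotProduct, hQdef, Matrix.of_apply, if_neg hj]
          simpa [dotProduct, mul_comm] using hne j
      rw [h2] at h1
      have h3 : (∑ j, (if j = i₀ then n ⬝ᵥ n else 0) * x j) = (n ⬝ᵥ n) * x i₀ := by
        rw [Finset.sum_eq_single i₀]
        · simp
        · intro j _ hj; rw [if_neg hj, zero_mul]
        · intro hj; exact absurd (Finset.mem_univ i₀) hj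
      have h4 : (n ⬝ᵥ n) * x i₀ = 0 := by
        rw [← h3]; exact h1
      rcases mul_eq_zero.mp h4 with h | h
      · exact absurd h hnn
      · exact h
    have hrest : ∀ r, (∑ j ∈ Finset.univ.erase i₀, e j r * x j) = 0 := by
      intro r
      have h1 := congrFun hx r
      rw [Pi.zero_apply] at h1
      have h2 : (Q *ᵥ x) r = ∑ j, (if j = i₀ then n r else e j r) * x j := by
        simp [hQdef, Matrix.mulVec, dotProduct]
      rw [h2] at h1
      rw [← Finset.add_sum_erase Finset.univ _ (Finset.mem_univ i₀)] at h1
      rw [if_pos rfl, hxi₀, mul_zero, zero_add] at h1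
      rw [← h1]
      apply Finset.sum_congr rfl
      intro j hj
      rw [if_neg (Finset.mem_erase.mp hj).1]
    have hxj : ∀ j : {i : Fin d // i ≠ i₀}, x (j : Fin d) = 0 := by
      apply Fintype.linearIndependent_iff.mp hind (fun j => x (j : Fin d))
      funext r
      rw [dot_sum_smul, Pi.zero_apply]
      have hconv : ∀ i : {i : Fin d // i ≠ i₀},
          x (i : Fin d) * (b (i : Fin d) - b i₀) r = x (i : Fin d) * e (i : Fin d) r :=
        fun i => rfl
      rw [Finset.sum_congr rfl (fun i _ => hconv i)]
      rw [← Finset.sum_subtype (Finset.univ.erase i₀)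
        (by intro j; simp [Finset.mem_erase]) (fun j => x j * e j r)]
      rw [← hrest r]
      exact Finset.sum_congr rfl (fun j _ => mul_comm _ _)
    apply hx0
    funext j
    by_cases hj : j = i₀
    · rw [hj]; exact hxi₀
    · exact hxj ⟨j, hj⟩
  have hQu : IsUnit Q.det := isUnit_iff_ne_zero.mpr hdetQ
  have hQtu : IsUnit Qᵀ.det := by rwa [Matrix.det_transpose]
  -- the auxiliary vector z
  set y : Fin d → ℝ := fun j => if j = i₀ then 0 else -(c j ⬝ᵥ n) with hydef
  set z : Fin d → ℝ := (Qᵀ)⁻¹ *ᵥ y with hzdef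
  have hQz : Qᵀ *ᵥ z = y := by
    rw [hzdef, Matrix.mulVec_mulVec, Matrix.mul_nonsing_inv _ hQtu, Matrix.one_mulVec]
  have hcolz : ∀ j, (fun r => Q r j) ⬝ᵥ z = y j := by
    intro j
    have := congrFun hQz j
    simpa [Matrix.mulVec, dotProduct, Matrix.transpose_apply] using this
  have hnz : n ⬝ᵥ z = 0 := by
    have := hcolz i₀
    simpa [hQdef, hydef] using this
  have hez : ∀ j, e j ⬝ᵥ z = -(c j ⬝ᵥ n) := by
    intro j
    by_cases hj : j = i₀
    · rw [hj, he0, hc0]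
      simp
    · have h5 := hcolz j
      simp only [hQdef, Matrix.of_apply, if_neg hj, hydef] at h5
      exact h5
  -- the matrix A
  set C : Matrix (Fin d) (Fin d) ℝ := Matrix.of (fun r j => if j = i₀ then z r else c j r) with hCdef
  set A : Matrix (Fin d) (Fin d) ℝ := C * Q⁻¹ with hAdef
  have hAQ : A * Q = C := by
    rw [hAdef, Matrix.mul_assoc, Matrix.nonsing_inv_mul _ hQu, Matrix.mul_one]
  have hAe : ∀ j, A *ᵥ e j = c j := by
    intro j
    by_cases hj : j = i₀
    · rw [hj, he0, hc0, Matrix.mulVec_zero]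
    · have h1 : e j = Q *ᵥ Pi.single j 1 := by
        rw [Matrix.mulVec_single_one]
        funext r
        simp [hQdef, if_neg hj]
      have h2 : c j = C *ᵥ Pi.single j 1 := by
        rw [Matrix.mulVec_single_one]
        funext r
        simp [hCdef, if_neg hj]
      rw [h1, Matrix.mulVec_mulVec, hAQ, ← h2]
  -- skewness
  set S₀ : Matrix (Fin d) (Fin d) ℝ := Qᵀ * C with hS₀def
  have hS₀e : ∀ j k, S₀ j k = (fun r => Q r j) ⬝ᵥ (fun r => C r k) := by
    intro j k
    simp [hS₀def, Matrix.mul_apply, dotProduct, Matrix.transpose_apply]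
  have hS₀ : S₀ᵀ = -S₀ := by
    ext k j
    show S₀ j k = -S₀ k j
    rw [eq_neg_iff_add_eq_zero]
    rw [hS₀e j k, hS₀e k j]
    by_cases hj : j = i₀ <;> by_cases hk : k = i₀
    · subst hj; subst hk
      simp only [hQdef, hCdef, Matrix.of_apply, if_pos rfl]
      show n ⬝ᵥ z + n ⬝ᵥ z = 0
      rw [hnz]; ring
    · subst hj
      simp only [hQdef, hCdef, Matrix.of_apply, if_pos rfl, if_neg hk]
      show n ⬝ᵥ c k + e k ⬝ᵥ z = 0
      rw [hez k, dotProduct_comm n (c k)]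
      ring
    · subst hk
      simp only [hQdef, hCdef, Matrix.of_apply, if_pos rfl, if_neg hj]
      show e j ⬝ᵥ z + n ⬝ᵥ c j = 0
      rw [hez j, dotProduct_comm n (c j)]
      ring
    · simp only [hQdef, hCdef, Matrix.of_apply, if_neg hj, if_neg hk]
      show e j ⬝ᵥ c k + e k ⬝ᵥ c j = 0
      exact key j k
  have hA : Aᵀ = -A := by
    have hA' : A = (Qᵀ)⁻¹ * S₀ * Q⁻¹ := by
      rw [hS₀def, Matrix.mul_assoc (Qᵀ)⁻¹ (Qᵀ * C) Q⁻¹, Matrix.mul_assoc Qᵀ C Q⁻¹,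
        Matrix.nonsing_inv_mul_cancel_left _ _ hQtu, hAdef]
    calc Aᵀ = ((Qᵀ)⁻¹ * S₀ * Q⁻¹)ᵀ := by rw [hA']
    _ = (Q⁻¹)ᵀ * (S₀ᵀ * ((Qᵀ)⁻¹)ᵀ) := by
        rw [Matrix.transpose_mul, Matrix.transpose_mul]
    _ = (Qᵀ)⁻¹ * ((-S₀) * Q⁻¹) := by
        rw [Matrix.transpose_nonsing_inv, Matrix.transpose_nonsing_inv,
          Matrix.transpose_transpose, hS₀]
    _ = -((Qᵀ)⁻¹ * S₀ * Q⁻¹) := by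
        rw [Matrix.neg_mul, Matrix.mul_neg, ← Matrix.mul_assoc]
    _ = -A := by rw [← hA']
  refine ⟨A, hA, ?_⟩
  intro i
  have h1 : A *ᵥ b i - A *ᵥ b i₀ = w i - w i₀ := by
    rw [← Matrix.mulVec_sub]
    exact hAe i
  have h2 : w i = w i₀ + (A *ᵥ b i - A *ᵥ b i₀) := by
    rw [h1]; abel
  rw [h2]; abel

lemma sum_dot {ι κ : Type*} [Fintype ι] [Fintype κ] (g : ι → κ → ℝ) (x : κ → ℝ) :
    (∑ i, g i) ⬝ᵥ x = ∑ i, g i ⬝ᵥ x := by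
  simp only [dotProduct, Finset.sum_apply, Finset.sum_mul]
  exact Finset.sum_comm

lemma zero_prop {d : ℕ} (hd : 0 < d) (S : Finset V) (T : Set V) (f v' : V → Fin d → ℝ)
    (hST : (S : Set V) ⊆ T) (hcardS : S.card = d)
    (hgen : ∀ w ∈ T, w ∉ S → LinearIndependent ℝ (fun u : ↥S => f (u : V) - f w))
    (hflex : ∀ u ∈ T, ∀ w ∈ T, (f u - f w) ⬝ᵥ (v' u - v' w) = 0)
    (hzero : ∀ u ∈ S, v' u = 0) :
    ∀ w ∈ T, v' w = 0 := by
  intro w hw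
  by_cases hwS : w ∈ S
  · exact hzero w hwS
  · have hind := hgen w hw hwS
    haveI : Nonempty ↥S := by
      have hpos : 0 < S.card := by omega
      obtain ⟨u, hu⟩ := Finset.card_pos.mp hpos
      exact ⟨⟨u, hu⟩⟩
    have hspan : Submodule.span ℝ (Set.range (fun u : ↥S => f (u : V) - f w)) = ⊤ := by
      apply hind.span_eq_top_of_card_eq_finrank
      rw [Fintype.card_coe, hcardS, Module.finrank_fin_fun]
    have horth : ∀ u : ↥S, (f (u : V) - f w) ⬝ᵥ v' w = 0 := by
      intro u
      have h1 := hflex (u : V) (hST u.2) w hw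
      rw [hzero (u : V) u.2, zero_sub, dotProduct_neg, neg_eq_zero] at h1
      exact h1
    have hmem : v' w ∈ Submodule.span ℝ (Set.range (fun u : ↥S => f (u : V) - f w)) := by
      rw [hspan]; trivial
    obtain ⟨cc, hcc⟩ := Submodule.mem_span_range_iff_exists_fun ℝ |>.mp hmem
    have h0 : (∑ i : ↥S, cc i • (f (i : V) - f w)) ⬝ᵥ v' w = 0 := by
      rw [sum_dot]
      apply Finset.sum_eq_zero
      intro u _
      rw [smul_dotProduct, horth u, smul_zero]
    have hdot : v' w ⬝ᵥ v' w = 0 :=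
      ((congrArg (fun y => y ⬝ᵥ v' w) hcc).symm).trans h0
    exact dotProduct_self_eq_zero.mp hdot

lemma exists_rigid_motion {d : ℕ} (hd : 0 < d) (S : Finset V) (hS : S.card = d)
    (f v : V → Fin d → ℝ) (u₀ : V) (hu₀ : u₀ ∈ S)
    (hind : LinearIndependent ℝ (fun u : ↥(S.erase u₀) => f (u : V) - f u₀))
    (hflex : ∀ u ∈ S, ∀ u' ∈ S, (f u - f u') ⬝ᵥ (v u - v u') = 0) :
    ∃ A : Matrix (Fin d) (Fin d) ℝ, ∃ t : Fin d → ℝ, Aᵀ = -A ∧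
      ∀ u ∈ S, v u = A *ᵥ f u + t := by
  classical
  have hcard : Fintype.card ↥S = d := by rw [Fintype.card_coe, hS]
  set σ : ↥S ≃ Fin d := S.equivFin.trans (finCongr hS) with hσ
  set s : Fin d → ↥S := fun i => σ.symm i with hs
  set i₀ : Fin d := σ ⟨u₀, hu₀⟩ with hi₀
  have hsi₀ : s i₀ = ⟨u₀, hu₀⟩ := σ.symm_apply_apply _
  set b : Fin d → Fin d → ℝ := fun i => f (s i : V) with hb
  set wv : Fin d → Fin d → ℝ := fun i => v (s i : V) with hwv
  have hindb : LinearIndependent ℝ (fun i : {i : Fin d // i ≠ i₀} => b (i : Fin d) - b i₀) := by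
    have hθinj : Function.Injective
        (fun i : {i : Fin d // i ≠ i₀} =>
          (⟨(s (i : Fin d) : V), by
            rw [Finset.mem_erase]
            refine ⟨?_, (s (i : Fin d)).2⟩
            intro heq
            apply i.2
            have : s (i : Fin d) = ⟨u₀, hu₀⟩ := Subtype.ext heq
            have h4 : σ (s (i : Fin d)) = σ ⟨u₀, hu₀⟩ := congrArg σ this
            have h5 : σ (s (i : Fin d)) = (i : Fin d) := σ.apply_symm_apply _
            exact h5.symm.trans h4⟩ : ↥(S.erase u₀))) := by
      intro i j hij
      have h1 : ((s (i : Fin d) : ↥S) : V) = ((s (j : Fin d) : ↥S) : V) :=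
        congrArg (fun x : ↥(S.erase u₀) => (x : V)) hij
      have h2 : s (i : Fin d) = s (j : Fin d) := Subtype.ext h1
      have h3 : (i : Fin d) = (j : Fin d) := σ.symm.injective h2
      exact Subtype.ext h3
    have := hind.comp _ hθinj
    convert this using 1
    funext i
    simp only [Function.comp_apply, hb, hsi₀]
  have hflexb : ∀ i j, (b i - b j) ⬝ᵥ (wv i - wv j) = 0 := by
    intro i j
    exact hflex (s i : V) (s i).2 (s j : V) (s j).2
  obtain ⟨A, hA, hAe⟩ := exists_skew i₀ b wv hindb hflexb
  refine ⟨A, v u₀ - A *ᵥ f u₀, hA, ?_⟩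
  intro u hu
  have h1 := hAe (σ ⟨u, hu⟩)
  have h2 : s (σ ⟨u, hu⟩) = ⟨u, hu⟩ := σ.symm_apply_apply _
  have h3 : wv (σ ⟨u, hu⟩) = v u := by rw [hwv]; simp only [h2]
  have h4 : b (σ ⟨u, hu⟩) = f u := by rw [hb]; simp only [h2]
  have h5 : wv i₀ = v u₀ := by rw [hwv]; simp only [hsi₀]
  have h6 : b i₀ = f u₀ := by rw [hb]; simp only [hsi₀]
  rw [h3, h4, h5, h6] at h1
  exact h1

lemma mem_flexK_iff (d : ℕ) (W' : Set V) (f : V → Fin d → ℝ) (x : (V × Fin d) → ℝ) :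
    x ∈ flex d {e : Finset V | e.card = 2 ∧ ∀ y ∈ e, y ∈ W'} f ↔
      ∀ u ∈ W', ∀ w ∈ W',
        (f u - f w) ⬝ᵥ ((fun k => x (u, k)) - fun k => x (w, k)) = 0 := by
  rw [mem_flex_iff]
  have hconv : ∀ u w : V, (f u - f w) ⬝ᵥ ((fun k => x (u, k)) - fun k => x (w, k))
      = ∑ k, (f u k - f w k) * (x (u, k) - x (w, k)) := fun u w => rfl
  constructor
  · intro h u hu w hw
    rw [hconv]
    by_cases huw : u = w
    · subst huw; simp
    · refine h u w huw ⟨Finset.card_pair huw, ?_⟩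
      intro y hy
      rcases Finset.mem_insert.mp hy with h1 | h1
      · subst h1; exact hu
      · rw [Finset.mem_singleton.mp h1]; exact hw
  · intro h u w huw he
    rw [← hconv]
    have hu : u ∈ W' := he.2 u (Finset.mem_insert_self u {w})
    have hw : w ∈ W' := he.2 w (Finset.mem_insert_of_mem (Finset.mem_singleton_self w))
    exact h u hu w hw

def KK (W' : Set V) : Set (Finset V) := {e : Finset V | e.card = 2 ∧ ∀ x ∈ e, x ∈ W'}


/-- **iterated gluing.** Let `d ≥ 1` and let `G₁, …, G_m` be finite
simple graphs, each generically `d`-rigid, such that for every `i > 1` the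
intersection `G_i ∩ (G₁ ∪ ⋯ ∪ G_{i−1})` contains at least `d` vertices.  Then
`G₁ ∪ ⋯ ∪ G_m` is generically `d`-rigid. -/
theorem iterated_gluing
    (d : ℕ) (hd : 1 ≤ d) (m : ℕ) (hm : 1 ≤ m)
    (W : Fin m → Set V) (E : Fin m → Set (Finset V))
    (hE : ∀ i, ∀ e ∈ E i, e.card = 2 ∧ ∀ x ∈ e, x ∈ W i)
    (hrig : ∀ i, GenericallyRigid d (W i) (E i))
    (hcommon : ∀ i : Fin m, 0 < (i : ℕ) →
      d ≤ (W i ∩ ⋃ j ∈ {j : Fin m | j < i}, W j).ncard) :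
    GenericallyRigid d (⋃ i, W i) (⋃ i, E i) := by
  classical
  -- the generic requirements
  have hcert : ∀ idx : (Fin m ⊕ Fin m ⊕ Bool) ⊕ (Finset V × V × Bool),
      ∃ p : MvPolynomial (V × Fin d) ℝ, p ≠ 0 ∧
        ∀ g : V → Fin d → ℝ, MvPolynomial.eval (fun q : V × Fin d => g q.1 q.2) p ≠ 0 →
          (match idx with
          | Sum.inl (Sum.inl i) => (rigidityMatrix d (E i) g).rank = maxRigRank d (E i)
          | Sum.inl (Sum.inr (Sum.inl i)) =>
              (rigidityMatrix d (KK (W i)) g).rank = maxRigRank d (KK (W i))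
          | Sum.inl (Sum.inr (Sum.inr true)) =>
              (rigidityMatrix d (⋃ i, E i) g).rank = maxRigRank d (⋃ i, E i)
          | Sum.inl (Sum.inr (Sum.inr false)) =>
              (rigidityMatrix d (KK (⋃ i, W i)) g).rank = maxRigRank d (KK (⋃ i, W i))
          | Sum.inr (S, w, true) => S.card = d → w ∉ S →
              LinearIndependent ℝ (fun u : ↥S => g (u : V) - g w)
          | Sum.inr (S, w, false) => S.card = d → w ∈ S →
              LinearIndependent ℝ (fun u : ↥(S.erase w) => g (u : V) - g w) : Prop) := by
    rintro ((i | (i | b)) | ⟨S, w, b⟩)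
    · exact exists_rank_cert d (E i)
    · exact exists_rank_cert d (KK (W i))
    · cases b
      · exact exists_rank_cert d (KK (⋃ i, W i))
      · exact exists_rank_cert d (⋃ i, E i)
    · cases b
      · -- erase case
        by_cases hc : S.card = d ∧ w ∈ S
        · obtain ⟨p, hp, hP⟩ := exists_indep_cert d (fun u : ↥(S.erase w) => (u : V)) w
            (fun a b hab => Subtype.ext hab)
            (fun u => (Finset.mem_erase.mp u.2).1)
            (by rw [Fintype.card_coe, Finset.card_erase_of_mem hc.2, hc.1]; omega)
          exact ⟨p, hp, fun g hg _ _ => hP g hg⟩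
        · refine ⟨1, one_ne_zero, fun g _ h1 h2 => absurd ⟨h1, h2⟩ hc⟩
      · by_cases hc : S.card = d ∧ w ∉ S
        · obtain ⟨p, hp, hP⟩ := exists_indep_cert d (fun u : ↥S => (u : V)) w
            (fun a b hab => Subtype.ext hab)
            (fun u h => hc.2 (h ▸ u.2))
            (by rw [Fintype.card_coe, hc.1])
          exact ⟨p, hp, fun g hg _ _ => hP g hg⟩
        · refine ⟨1, one_ne_zero, fun g _ h1 h2 => absurd ⟨h1, h2⟩ hc⟩
  obtain ⟨f, hf⟩ := exists_common_generic d _ hcert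
  have G1 : ∀ i, (rigidityMatrix d (E i) f).rank = maxRigRank d (E i) :=
    fun i => hf (Sum.inl (Sum.inl i))
  have G2 : ∀ i, (rigidityMatrix d (KK (W i)) f).rank = maxRigRank d (KK (W i)) :=
    fun i => hf (Sum.inl (Sum.inr (Sum.inl i)))
  have G3a : (rigidityMatrix d (⋃ i, E i) f).rank = maxRigRank d (⋃ i, E i) :=
    hf (Sum.inl (Sum.inr (Sum.inr true)))
  have G3b : (rigidityMatrix d (KK (⋃ i, W i)) f).rank = maxRigRank d (KK (⋃ i, W i)) :=
    hf (Sum.inl (Sum.inr (Sum.inr false)))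
  have GA : ∀ S : Finset V, ∀ w : V, S.card = d → w ∉ S →
      LinearIndependent ℝ (fun u : ↥S => f (u : V) - f w) :=
    fun S w h1 h2 => hf (Sum.inr (S, w, true)) h1 h2
  have GB : ∀ S : Finset V, ∀ w : V, S.card = d → w ∈ S →
      LinearIndependent ℝ (fun u : ↥(S.erase w) => f (u : V) - f w) :=
    fun S w h1 h2 => hf (Sum.inr (S, w, false)) h1 h2
  have hEK : ∀ i, E i ⊆ KK (W i) := fun i e he => ⟨(hE i e he).1, (hE i e he).2⟩
  have hflexEq : ∀ i, flex d (E i) f = flex d (KK (W i)) f := by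
    intro i
    apply flex_eq_of_rank_eq (hEK i) f
    rw [G1 i, G2 i]
    exact hrig i
  set U : Fin m → Set V := fun i => ⋃ j, ⋃ (_ : j ≤ i), W j with hU
  have hUmem : ∀ (i : Fin m) (v : V), v ∈ U i ↔ ∃ j ≤ i, v ∈ W j := by
    intro i v; simp [hU]
  have claim : ∀ k : ℕ, ∀ i : Fin m, (i : ℕ) = k →
      ∀ x : (V × Fin d) → ℝ, (∀ j, x ∈ flex d (KK (W j)) f) →
        x ∈ flex d (KK (U i)) f := by
    intro k
    induction k with
    | zero =>
      intro i hi x hx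
      have hUW : U i = W i := by
        ext v
        rw [hUmem]
        constructor
        · rintro ⟨j, hj, hv⟩
          have hj' : (j : ℕ) ≤ (i : ℕ) := hj
          have hje : j = i := Fin.ext (by omega)
          rwa [← hje]
        · intro hv
          exact ⟨i, le_refl i, hv⟩
      rw [hUW]
      exact hx i
    | succ k ih =>
      intro i hi x hx
      have hk : k < m := by omega
      set i' : Fin m := ⟨k, hk⟩ with hi'
      have hxU' : x ∈ flex d (KK (U i')) f := ih i' rfl x hx
      have hcom := hcommon i (by omega)
      have hUlt : (⋃ j ∈ {j : Fin m | j < i}, W j) = U i' := by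
        ext v
        rw [hUmem]
        simp only [Set.mem_iUnion, Set.mem_setOf_eq]
        constructor
        · rintro ⟨j, hj, hv⟩
          have hj' : (j : ℕ) < (i : ℕ) := hj
          exact ⟨j, by rw [Fin.le_def]; simp only [hi']; omega, hv⟩
        · rintro ⟨j, hj, hv⟩
          have hj' : (j : ℕ) ≤ (i' : ℕ) := hj
          exact ⟨j, by rw [Fin.lt_def]; simp only [hi'] at hj'; omega, hv⟩
      rw [hUlt] at hcom
      set S₀ : Set V := W i ∩ U i' with hS₀
      have hS₀fin : S₀.Finite := Set.toFinite _
      have hScard0 : d ≤ hS₀fin.toFinset.card := by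
        rw [← Set.ncard_eq_toFinset_card _ hS₀fin]
        exact hcom
      obtain ⟨S, hSsub, hScard⟩ := Finset.exists_subset_card_eq hScard0
      have hSsub' : (S : Set V) ⊆ S₀ := by
        intro v hv
        exact (Set.Finite.mem_toFinset hS₀fin).mp (hSsub hv)
      have hSW : (S : Set V) ⊆ W i := fun v hv => (hSsub' hv).1
      have hSU : (S : Set V) ⊆ U i' := fun v hv => (hSsub' hv).2
      obtain ⟨u₀, hu₀⟩ := Finset.card_pos.mp (show 0 < S.card by omega)
      set xv : V → Fin d → ℝ := fun u k => x (u, k) with hxv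
      have hflexWi : ∀ u ∈ W i, ∀ w ∈ W i, (f u - f w) ⬝ᵥ (xv u - xv w) = 0 := by
        intro u hu w hw
        exact (mem_flexK_iff d (W i) f x).mp (hx i) u hu w hw
      have hflexU' : ∀ u ∈ U i', ∀ w ∈ U i', (f u - f w) ⬝ᵥ (xv u - xv w) = 0 := by
        intro u hu w hw
        exact (mem_flexK_iff d (U i') f x).mp hxU' u hu w hw
      obtain ⟨A, t, hA, hAf⟩ := exists_rigid_motion hd S hScard f xv u₀ hu₀
        (GB S u₀ hScard hu₀)
        (fun u hu u' hu' => hflexWi u (hSW hu) u' (hSW hu'))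
      set v' : V → Fin d → ℝ := fun u => xv u - (A *ᵥ f u + t) with hv'
      have hv'flex : ∀ (T : Set V), (∀ u ∈ T, ∀ w ∈ T, (f u - f w) ⬝ᵥ (xv u - xv w) = 0) →
          ∀ u ∈ T, ∀ w ∈ T, (f u - f w) ⬝ᵥ (v' u - v' w) = 0 := by
        intro T hT u hu w hw
        have h1 : v' u - v' w = (xv u - xv w) - (A *ᵥ f u - A *ᵥ f w) := by
          funext kk
          simp only [hv', Pi.sub_apply, Pi.add_apply]
          ring
        rw [h1, dotProduct_sub, hT u hu w hw, ← Matrix.mulVec_sub, skew_dot hA]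
        simp
      have hzS : ∀ u ∈ S, v' u = 0 := by
        intro u hu
        show xv u - (A *ᵥ f u + t) = 0
        rw [hAf u hu]
        exact sub_self _
      have hz1 := zero_prop hd S (U i') f v' hSU hScard
        (fun w _ hw => GA S w hScard hw) (hv'flex _ hflexU') hzS
      have hz2 := zero_prop hd S (W i) f v' hSW hScard
        (fun w _ hw => GA S w hScard hw) (hv'flex _ hflexWi) hzS
      rw [show KK (U i) = {e : Finset V | e.card = 2 ∧ ∀ y ∈ e, y ∈ U i} from rfl]
      rw [mem_flexK_iff]
      intro u hu w hw
      have hUi : ∀ y, y ∈ U i → v' y = 0 := by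
        intro y hy
        rw [hUmem] at hy
        obtain ⟨j, hj, hyW⟩ := hy
        have hj' : (j : ℕ) ≤ (i : ℕ) := hj
        by_cases hjk : (j : ℕ) ≤ k
        · exact hz1 y ((hUmem i' y).mpr ⟨j, by rw [Fin.le_def]; simp only [hi']; omega, hyW⟩)
        · have hje : j = i := Fin.ext (by omega)
          exact hz2 y (by rwa [← hje])
      have h3 : xv u = A *ᵥ f u + t := sub_eq_zero.mp (hUi u hu)
      have h4 : xv w = A *ᵥ f w + t := sub_eq_zero.mp (hUi w hw)
      have h5 : ((fun k => x (u, k)) - fun k => x (w, k)) = A *ᵥ (f u - f w) := by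
        rw [Matrix.mulVec_sub]
        show xv u - xv w = _
        rw [h3, h4]
        funext kk
        simp only [Pi.sub_apply, Pi.add_apply]
        ring
      rw [h5]
      exact skew_dot hA (f u - f w)
  have hsubU : (⋃ i, E i) ⊆ KK (⋃ i, W i) := by
    intro e he
    rw [Set.mem_iUnion] at he
    obtain ⟨i, hei⟩ := he
    exact ⟨(hE i e hei).1, fun y hy => Set.mem_iUnion.mpr ⟨i, (hE i e hei).2 y hy⟩⟩
  have hm' : m - 1 < m := by omega
  have hUlast : U ⟨m - 1, hm'⟩ = ⋃ i, W i := by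
    ext v
    rw [hUmem]
    simp only [Set.mem_iUnion]
    constructor
    · rintro ⟨j, _, hv⟩
      exact ⟨j, hv⟩
    · rintro ⟨j, hv⟩
      refine ⟨j, ?_, hv⟩
      rw [Fin.le_def]
      show (j : ℕ) ≤ m - 1
      have := j.2
      omega
  have hflexfinal : flex d (⋃ i, E i) f = flex d (KK (⋃ i, W i)) f := by
    apply le_antisymm
    · intro x hx
      have hxall : ∀ j, x ∈ flex d (KK (W j)) f := by
        intro j
        rw [← hflexEq j]
        exact (mem_flex_iUnion_iff E f x).mp hx j
      have hc := claim (m - 1) ⟨m - 1, hm'⟩ rfl x hxall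
      rwa [hUlast] at hc
    · exact flex_antitone hsubU f
  have hrk := rank_eq_of_flex_eq hflexfinal
  show maxRigRank d (⋃ i, E i) = maxRigRank d (KK (⋃ i, W i))
  rw [← G3a, ← G3b, hrk]

end Paper2CM
end
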